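/- arXiv:2410.06856 — 3 statements merged into one kernel-verified Lean document; each statement's English description precedes it below -/
import Mathlib

section
/- For any real s > 10 and any p ∈ [0,1], the probability that two independent uniform samples x, y from ⟨s⟩ satisfy x + y ∈ ⟨s·p⟩ lies in the interval [(p − p²/4) − 7/s, (p − p²/4) + 7/s]. -/
/-- `⟨s⟩`: the set of integers `{-⌊s/2⌋, …, ⌊s/2⌋}`. -/
noncomputable def intRange (s : ℝ) : Finset ℤ := Finset.Icc (-⌊s / 2⌋) ⌊s / 2⌋

section Aux
open Finset


lemma fiber_card (n t : ℤ) (ht : |t| ≤ 2*n) :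
    (((Finset.Icc (-n) n ×ˢ Finset.Icc (-n) n).filter fun q => q.1 + q.2 = t).card : ℤ)
      = 2*n+1 - |t| := by
  have hset : ((Finset.Icc (-n) n ×ˢ Finset.Icc (-n) n).filter fun q => q.1 + q.2 = t)
      = (Finset.Icc (max (-n) (t-n)) (min n (t+n))).image (fun x => (x, t-x)) := by
    ext ⟨x, y⟩
    simp only [Finset.mem_filter, Finset.mem_product, Finset.mem_Icc, Finset.mem_image,
      Prod.mk.injEq, le_max_iff, max_le_iff, le_min_iff, min_le_iff, Prod.ext_iff]
    constructor
    · rintro ⟨⟨hx, hy⟩, h⟩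
      exact ⟨x, by omega⟩
    · rintro ⟨a, ha, rfl, rfl⟩
      omega
  rw [hset, Finset.card_image_of_injective _ (fun a b h => by simpa using congrArg Prod.fst h)]
  rw [Int.card_Icc]
  rcases le_or_gt 0 t with h | h
  · rw [abs_of_nonneg h] at ht ⊢; omega
  · rw [abs_of_neg h] at ht ⊢; omega

lemma sum_abs_Icc (m : ℕ) : ∑ t ∈ Finset.Icc (-(m:ℤ)) m, |t| = m*(m+1) := by
  induction m with
  | zero => simp
  | succ k ih =>
    have h1 : Finset.Icc (-((k:ℤ)+1)) ((k:ℤ)+1)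
        = insert (-((k:ℤ)+1)) (insert ((k:ℤ)+1) (Finset.Icc (-(k:ℤ)) k)) := by
      ext x
      simp only [Finset.mem_Icc, Finset.mem_insert]
      omega
    push_cast
    rw [h1, Finset.sum_insert (by simp only [Finset.mem_insert, Finset.mem_Icc]; omega),
      Finset.sum_insert (by simp only [Finset.mem_Icc]; omega)]
    push_cast at ih
    rw [ih]
    rw [abs_of_nonpos (by omega), abs_of_nonneg (by omega)]
    ring

lemma count_eq (n m : ℤ) (hm : 0 ≤ m) (hmn : m ≤ n) :
    ((((Finset.Icc (-n) n ×ˢ Finset.Icc (-n) n)).filter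
        fun q => q.1+q.2 ∈ Finset.Icc (-m) m).card : ℤ)
      = (2*m+1)*(2*n+1) - m*(m+1) := by
  have key := Finset.card_eq_sum_card_fiberwise (f := fun q : ℤ × ℤ => q.1 + q.2)
    (s := (Finset.Icc (-n) n ×ˢ Finset.Icc (-n) n).filter (fun q => q.1 + q.2 ∈ Finset.Icc (-m) m))
    (t := Finset.Icc (-m) m) (fun x hx => (Finset.mem_filter.mp hx).2)
  rw [key]
  push_cast
  have hfib : ∀ t ∈ Finset.Icc (-m) m,
      ((((Finset.Icc (-n) n ×ˢ Finset.Icc (-n) n)).filter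
        (fun q => q.1+q.2 ∈ Finset.Icc (-m) m)).filter (fun q => q.1+q.2 = t)).card
      = (((Finset.Icc (-n) n ×ˢ Finset.Icc (-n) n)).filter (fun q => q.1+q.2 = t)).card := by
    intro t ht
    congr 1
    rw [Finset.filter_filter]
    apply Finset.filter_congr
    intro q _
    simp only [Finset.mem_Icc] at ht ⊢
    constructor
    · rintro ⟨_, h⟩; exact h
    · intro h; omega
  rw [Finset.sum_congr rfl (fun t ht => by rw [hfib t ht])]
  have : ∀ t ∈ Finset.Icc (-m) m,
      ((((Finset.Icc (-n) n ×ˢ Finset.Icc (-n) n)).filter (fun q => q.1+q.2 = t)).card : ℤ)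
        = 2*n+1 - |t| := by
    intro t ht
    simp only [Finset.mem_Icc] at ht
    exact fiber_card n t (by rw [abs_le]; omega)
  calc (∑ t ∈ Finset.Icc (-m) m,
        ((((Finset.Icc (-n) n ×ˢ Finset.Icc (-n) n)).filter (fun q => q.1+q.2 = t)).card : ℤ))
      = ∑ t ∈ Finset.Icc (-m) m, (2*n+1 - |t|) := Finset.sum_congr rfl this
    _ = (2*m+1)*(2*n+1) - m*(m+1) := by
        rw [Finset.sum_sub_distrib, Finset.sum_const, Int.card_Icc, nsmul_eq_mul]
        have h2 : (((m + 1 - -m).toNat : ℤ)) = 2*m+1 := by omega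
        have h3 := sum_abs_Icc m.toNat
        rw [Int.toNat_of_nonneg hm] at h3
        rw [h2, h3]

lemma real_bound2 (s p D u : ℝ) (hs : 10 < s) (hp0 : 0 ≤ p) (hp1 : p ≤ 1)
    (hD1 : s - 1 < D) (hu1 : -2 ≤ u) (hu2 : u ≤ 2) :
    ((p - p^2/4)*D^2 + (u*D*(1-p/2) + (1-u^2)/4))/D^2 ∈
      Set.Icc ((p - p ^ 2 / 4) - 7 / s) ((p - p ^ 2 / 4) + 7 / s) := by
  have hs0 : (0:ℝ) < s := by linarith
  have hD0 : (0:ℝ) < D := by linarith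
  have hD2pos : (0:ℝ) < D^2 := by positivity
  have hQ : ((p - p^2/4)*D^2 + (u*D*(1-p/2) + (1-u^2)/4))/D^2
      = (p - p^2/4) + (u*D*(1-p/2) + (1-u^2)/4)/D^2 := by
    rw [add_div, mul_div_cancel_right₀ _ (ne_of_gt hD2pos)]
  have h1 : u*D*(1-p/2) + (1-u^2)/4 ≤ 2*D + 1/4 := by
    nlinarith [sq_nonneg u, mul_nonneg (by linarith : (0:ℝ) ≤ 2 - u) (by linarith : (0:ℝ) ≤ 1 - p/2)]
  have h2 : -(2*D) - 3/4 ≤ u*D*(1-p/2) + (1-u^2)/4 := by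
    nlinarith [sq_nonneg u, mul_nonneg (by linarith : (0:ℝ) ≤ u + 2) (by linarith : (0:ℝ) ≤ 1 - p/2)]
  have h3 : (2*D + 3/4) * s ≤ 7 * D^2 := by nlinarith
  have hup : (u*D*(1-p/2) + (1-u^2)/4)/D^2 ≤ 7/s := by
    rw [div_le_div_iff₀ hD2pos hs0]
    nlinarith [mul_le_mul_of_nonneg_right h1 (le_of_lt hs0)]
  have hlo : -(7/s) ≤ (u*D*(1-p/2) + (1-u^2)/4)/D^2 := by
    have h4 : (-7)/s ≤ (u*D*(1-p/2) + (1-u^2)/4)/D^2 := by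
      rw [div_le_div_iff₀ hs0 hD2pos]
      nlinarith [mul_le_mul_of_nonneg_right h2 (le_of_lt hs0)]
    linarith [h4, (by ring : (-7)/s = -(7/s))]
  rw [hQ, Set.mem_Icc]
  constructor <;> linarith

lemma real_bound (s p D E : ℝ) (hs : 10 < s) (hp0 : 0 ≤ p) (hp1 : p ≤ 1)
    (hD1 : s - 1 < D) (hD2 : D ≤ s + 1) (hE1 : s*p - 1 < E) (hE2 : E ≤ s*p + 1) :
    (E*D - (E^2-1)/4)/D^2 ∈ Set.Icc ((p - p ^ 2 / 4) - 7 / s) ((p - p ^ 2 / 4) + 7 / s) := by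
  have hD0 : (0:ℝ) < D := by linarith
  have hu2 : E - p*D ≤ 2 := by nlinarith
  have hu1 : -2 ≤ E - p*D := by nlinarith
  have hexp : E*D - (E^2-1)/4
      = (p - p^2/4)*D^2 + ((E - p*D)*D*(1-p/2) + (1-(E - p*D)^2)/4) := by ring
  rw [hexp]
  exact real_bound2 s p D (E - p*D) hs hp0 hp1 hD1 hu1 hu2

end Aux

theorem prob_sum_in_range_bounds (s : ℝ) (hs : 10 < s) (p : ℝ) (hp0 : 0 ≤ p) (hp1 : p ≤ 1) :
    (((intRange s ×ˢ intRange s).filter fun q => q.1 + q.2 ∈ intRange (s * p)).card : ℝ) /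
        ((intRange s).card : ℝ) ^ 2 ∈
      Set.Icc ((p - p ^ 2 / 4) - 7 / s) ((p - p ^ 2 / 4) + 7 / s) := by
  have hsp0 : 0 ≤ s * p := mul_nonneg (by linarith) hp0
  set n := ⌊s/2⌋ with hn
  set m := ⌊s*p/2⌋ with hm
  have hm0 : 0 ≤ m := Int.floor_nonneg.mpr (by positivity)
  have hmn : m ≤ n := Int.floor_le_floor (by nlinarith)
  have hcount := count_eq n m hm0 hmn
  have hcountR : ((((Finset.Icc (-n) n ×ˢ Finset.Icc (-n) n)).filter
      (fun q => q.1 + q.2 ∈ Finset.Icc (-m) m)).card : ℝ)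
      = (2*(m:ℝ)+1)*(2*(n:ℝ)+1) - (m:ℝ)*((m:ℝ)+1) := by exact_mod_cast hcount
  have hcard : ((Finset.Icc (-n) n).card : ℝ) = 2*(n:ℝ)+1 := by
    rw [Int.card_Icc]
    have h : ((n + 1 - -n).toNat : ℤ) = 2*n+1 := by omega
    exact_mod_cast h
  have hnle : (n:ℝ) ≤ s/2 := Int.floor_le _
  have hngt : s/2 - 1 < (n:ℝ) := Int.sub_one_lt_floor _
  have hmle : (m:ℝ) ≤ s*p/2 := Int.floor_le _
  have hmgt : s*p/2 - 1 < (m:ℝ) := Int.sub_one_lt_floor _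
  simp only [intRange, ← hn, ← hm]
  rw [hcountR, hcard]
  have hrw : (2*(m:ℝ)+1)*(2*(n:ℝ)+1) - (m:ℝ)*((m:ℝ)+1)
      = (2*(m:ℝ)+1)*(2*(n:ℝ)+1) - ((2*(m:ℝ)+1)^2 - 1)/4 := by ring
  rw [hrw]
  exact real_bound s p (2*(n:ℝ)+1) (2*(m:ℝ)+1) hs hp0 hp1
    (by linarith) (by linarith) (by linarith) (by linarith)
end

section
/- For any real s > 20 and any p ∈ [0,1], the Max-Ratio distance between the uniform distribution U_{sp} on ⟨s·p⟩ and the distribution 2·U_s conditioned on lying in ⟨s·p⟩ satisfies Δ_MR(U_{sp}, (2·U_s)|_{⟨sp⟩}) ≤ (1 − p/2)^(−1) · (1 + 30/s). -/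
/-- The Max-Ratio distance between two mass functions `D₀, D₁` (with the same support):
the smallest `λ ≥ 1` such that `D₁ x ∈ [λ⁻¹·D₀ x, λ·D₀ x]` for every `x` in the support. -/
noncomputable def MRdist {α : Type*} (D₀ D₁ : α → ℝ) : ℝ :=
  sInf {l : ℝ | 1 ≤ l ∧ ∀ x, D₀ x ≠ 0 → l⁻¹ * D₀ x ≤ D₁ x ∧ D₁ x ≤ l * D₀ x}

/-!
Write `k = ⌊sp/2⌋` and `m = ⌊s/2⌋`, so that `⟨sp⟩ = [-k, k]` and `⟨s⟩ = [-m, m]`. For `|z| ≤ k`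
there are `2m + 1 - |z|` pairs in `⟨s⟩²` with sum `z`, and summing over `⟨sp⟩` gives the
conditioning mass `(2k+1)(2m+1) - k(k+1)`. The ratio of the two distributions at `z` is therefore
largest at `z = 0` and smallest at `|z| = k`, and both extremes stay within the factor
`(1 - p/2)⁻¹(1 + 30/s) = 2(s+30)/(s(2-p))` of `1`, by polynomial inequalities that only use
`2k ≤ sp` and `s ≤ 2m + 2`.
-/

open Finset

theorem MRdist_indicator_le {α : Type*} {S : Set α} {f g : α → ℝ} {l : ℝ} (hl : 1 ≤ l)
    (h : ∀ x ∈ S, l⁻¹ * f x ≤ g x ∧ g x ≤ l * f x) :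
    MRdist (S.indicator f) (S.indicator g) ≤ l := by
  refine csInf_le ⟨1, fun _ hl' => hl'.1⟩ ⟨hl, fun x hx => ?_⟩
  by_cases hxS : x ∈ S
  · simpa only [Set.indicator_of_mem hxS] using h x hxS
  · simp [Set.indicator_of_notMem hxS] at hx

theorem card_filter_add_eq {m z : ℤ} (hz : |z| ≤ m) :
    (#{q ∈ Icc (-m) m ×ˢ Icc (-m) m | q.1 + q.2 = z} : ℤ) = 2 * m + 1 - |z| := by
  have hfiber : #{q ∈ Icc (-m) m ×ˢ Icc (-m) m | q.1 + q.2 = z}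
      = #(Icc (max (-m) (z - m)) (min m (z + m))) := by
    refine card_nbij' Prod.fst (fun x => (x, z - x)) ?_ ?_ ?_ ?_ <;>
      intro q <;> simp only [coe_filter, coe_Icc, mem_product, mem_Icc, Set.mem_ofPred_eq,
        Set.mem_Icc, max_le_iff, le_min_iff, Prod.ext_iff, implies_true, true_and] <;> omega
  rw [hfiber, Int.card_Icc]
  rcases abs_cases z with ⟨hz', _⟩ | ⟨hz', _⟩ <;> omega

theorem sum_Icc_sub_abs (c : ℤ) {k : ℤ} (hk : 0 ≤ k) :
    ∑ z ∈ Icc (-k) k, (c - |z|) = (2 * k + 1) * c - k * (k + 1) := by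
  induction k, hk using Int.leInduction with
  | base => simp
  | succ k hk ih =>
    have hIcc : Icc (-(k + 1)) (k + 1) = insert (-(k + 1)) (insert (k + 1) (Icc (-k) k)) := by
      ext x
      simp only [mem_Icc, mem_insert]
      omega
    rw [hIcc, sum_insert (by simp only [mem_insert, mem_Icc]; omega),
      sum_insert (by simp only [mem_Icc]; omega), ih, abs_neg, abs_of_nonneg (by omega)]
    ring

theorem card_filter_add_mem_Icc {k m : ℤ} (hk : 0 ≤ k) (hkm : k ≤ m) :
    (#{q ∈ Icc (-m) m ×ˢ Icc (-m) m | q.1 + q.2 ∈ Icc (-k) k} : ℤ)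
      = (2 * k + 1) * (2 * m + 1) - k * (k + 1) := by
  rw [← sum_card_fiberwise_eq_card_filter, Nat.cast_sum, ← sum_Icc_sub_abs _ hk]
  refine sum_congr rfl fun z hz => card_filter_add_eq ?_
  rw [mem_Icc] at hz
  rw [abs_le]
  omega

theorem MRdist_uniform_Icc_sum_conditioned_le {k m : ℤ} {l : ℝ} (hk : 0 ≤ k) (hkm : k ≤ m)
    (hl : 1 ≤ l)
    (hcenter : (2 * m + 1) * (2 * k + 1) ≤ l * ((2 * k + 1) * (2 * m + 1) - k * (k + 1) : ℝ))
    (hedge : 2 * m + 1 ≤ l * (2 * m + 1 - k : ℝ)) :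
    MRdist (Set.indicator ↑(Icc (-k) k) fun _ => (#(Icc (-k) k) : ℝ)⁻¹)
      (Set.indicator ↑(Icc (-k) k) fun z =>
        (#{q ∈ Icc (-m) m ×ˢ Icc (-m) m | q.1 + q.2 = z} : ℝ) /
          #{q ∈ Icc (-m) m ×ˢ Icc (-m) m | q.1 + q.2 ∈ Icc (-k) k}) ≤ l := by
  have hsize : (#(Icc (-k) k) : ℝ) = 2 * k + 1 := by
    have : (#(Icc (-k) k) : ℤ) = 2 * k + 1 := by rw [Int.card_Icc]; omega
    exact_mod_cast this
  have hmass : (#{q ∈ Icc (-m) m ×ˢ Icc (-m) m | q.1 + q.2 ∈ Icc (-k) k} : ℝ)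
      = (2 * k + 1) * (2 * m + 1) - k * (k + 1) := by
    exact_mod_cast card_filter_add_mem_Icc hk hkm
  refine MRdist_indicator_le hl fun z hz => ?_
  have hzk : |(z : ℝ)| ≤ k := by exact_mod_cast abs_le.mpr (mem_Icc.mp hz)
  have hfiber :
      (#{q ∈ Icc (-m) m ×ˢ Icc (-m) m | q.1 + q.2 = z} : ℝ) = 2 * m + 1 - |(z : ℝ)| := by
    exact_mod_cast card_filter_add_eq ((abs_le.mpr (mem_Icc.mp hz)).trans hkm)
  have hk' : (0 : ℝ) ≤ k := by exact_mod_cast hk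
  have hkm' : (k : ℝ) ≤ m := by exact_mod_cast hkm
  have hl' : 0 < l := by linarith
  have hmass_pos : (0 : ℝ) < (2 * k + 1) * (2 * m + 1) - k * (k + 1) := by nlinarith
  have hL : (0 : ℝ) < 2 * k + 1 := by linarith
  have hlL : 0 < l * (2 * k + 1) := mul_pos hl' hL
  rw [hsize, hmass, hfiber]
  constructor
  · rw [← mul_inv, inv_eq_one_div, div_le_div_iff₀ hlL hmass_pos]
    nlinarith [mul_le_mul_of_nonneg_right hedge hL.le,
      mul_le_mul_of_nonneg_left hzk hlL.le]
  · rw [← div_eq_mul_inv, div_le_div_iff₀ hmass_pos hL]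
    nlinarith [mul_nonneg (abs_nonneg (z : ℝ)) hL.le]

noncomputable def mrBound (s p : ℝ) : ℝ := (1 - p / 2)⁻¹ * (1 + 30 / s)

section mrBound

variable {s p : ℝ}

theorem le_mrBound_mul_iff (hs : 0 < s) (hp : p < 2) {x y : ℝ} :
    x ≤ mrBound s p * y ↔ x * (s * (2 - p)) ≤ 2 * (s + 30) * y := by
  have hsp : 0 < s * (2 - p) := mul_pos hs (by linarith)
  have hbound : mrBound s p = 2 * (s + 30) / (s * (2 - p)) := by
    rw [mrBound]
    field_simp
  rw [hbound, div_mul_eq_mul_div, le_div_iff₀ hsp]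

theorem one_le_mrBound (hs : 0 < s) (hp0 : 0 ≤ p) (hp1 : p < 2) : 1 ≤ mrBound s p := by
  simpa using (le_mrBound_mul_iff hs hp1 (x := 1) (y := 1)).mpr
    (by nlinarith [mul_nonneg hs.le hp0])

theorem center_mul_le_mrBound_mul_mass {K M : ℝ} (hs : 20 < s) (hp0 : 0 ≤ p) (hp1 : p ≤ 1)
    (hK0 : 0 ≤ K) (hK : 2 * K ≤ s * p) (hM : s ≤ 2 * M + 2) :
    (2 * M + 1) * (2 * K + 1)
      ≤ mrBound s p * ((2 * K + 1) * (2 * M + 1) - K * (K + 1)) := by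
  have hsp : s * p ≤ s := mul_le_of_le_one_right (by linarith) hp1
  -- after clearing the factor `2K + 1`, via `2K(K + 1) ≤ (2K + 1)(K + 1)`, this is what remains
  have hreduced : (s + 30) * (K + 1) ≤ (2 * M + 1) * (60 + s * p) := by
    nlinarith [mul_le_mul_of_nonneg_left hK (by linarith : 0 ≤ s + 30),
      mul_le_mul_of_nonneg_right hM (by nlinarith : 0 ≤ 60 + s * p),
      mul_nonneg (mul_nonneg (by linarith : 0 ≤ s) (by linarith : 0 ≤ s)) hp0]
  rw [le_mrBound_mul_iff (by linarith) (by linarith)]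
  nlinarith [mul_le_mul_of_nonneg_left hreduced (by linarith : 0 ≤ 2 * K + 1),
    mul_nonneg (by linarith : 0 ≤ s + 30) (by linarith : 0 ≤ K + 1)]

theorem center_le_mrBound_mul_edge {K M : ℝ} (hs : 20 < s) (hp0 : 0 ≤ p) (hp1 : p ≤ 1)
    (hK : 2 * K ≤ s * p) (hM : s ≤ 2 * M + 2) :
    2 * M + 1 ≤ mrBound s p * (2 * M + 1 - K) := by
  have hsp : s * p ≤ s := mul_le_of_le_one_right (by linarith) hp1
  rw [le_mrBound_mul_iff (by linarith) (by linarith)]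
  nlinarith [mul_le_mul_of_nonneg_left hK (by linarith : 0 ≤ s + 30),
    mul_le_mul_of_nonneg_right hM (by nlinarith : 0 ≤ 60 + s * p)]

end mrBound

theorem MRdist_sum_conditioned_from_uniform (s : ℝ) (hs : 20 < s)
    (p : ℝ) (hp0 : 0 ≤ p) (hp1 : p ≤ 1) :
    MRdist
      -- `U_{sp}`: the uniform distribution on `⟨s·p⟩`
      (Set.indicator (↑(intRange (s * p)) : Set ℤ) fun _ => ((intRange (s * p)).card : ℝ)⁻¹)
      -- `(2·U_s)|_{⟨sp⟩}`: the distribution of `x + y` with `x, y ← U_s` independent,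
      -- conditioned on `x + y ∈ ⟨s·p⟩`
      (Set.indicator (↑(intRange (s * p)) : Set ℤ) fun z =>
        (((intRange s ×ˢ intRange s).filter fun q => q.1 + q.2 = z).card : ℝ) /
          (((intRange s ×ˢ intRange s).filter fun q => q.1 + q.2 ∈ intRange (s * p)).card : ℝ))
      ≤ (1 - p / 2)⁻¹ * (1 + 30 / s) := by
  have hk0 : 0 ≤ ⌊s * p / 2⌋ := Int.floor_nonneg.mpr (by positivity)
  have hkm : ⌊s * p / 2⌋ ≤ ⌊s / 2⌋ := Int.floor_mono (by nlinarith)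
  have hK : 2 * (⌊s * p / 2⌋ : ℝ) ≤ s * p := by linarith [Int.floor_le (s * p / 2)]
  have hM : s ≤ 2 * (⌊s / 2⌋ : ℝ) + 2 := by linarith [Int.sub_one_lt_floor (s / 2)]
  exact MRdist_uniform_Icc_sum_conditioned_le hk0 hkm
    (one_le_mrBound (by linarith) hp0 (by linarith))
    (center_mul_le_mrBound_mul_mass hs hp0 hp1 (by exact_mod_cast hk0) hK hM)
    (center_le_mrBound_mul_edge hs hp0 hp1 hK hM)
end

section
/- For any real s > 10 and any p ∈ (0,1], if w, x, y are independent uniform samples from ⟨s⟩, then Pr[w + x ∈ ⟨s·p⟩ and w + y ∈ ⟨s·p⟩] ≤ p² · (1 + 3/(s·p))². -/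
/-!
The map `(w, x, y) ↦ (w, w + x, w + y)` is injective, so the favourable triples number at most
`|⟨s⟩| · |⟨s·p⟩|²`. Since `|⟨s·p⟩| ≤ s·p + 1 ≤ (p + 3/s)(s - 1) ≤ (p + 3/s)·|⟨s⟩|` and
`p + 3/s = p·(1 + 3/(s·p))`, the probability is at most `p²·(1 + 3/(s·p))²`.
-/

open Finset

theorem card_filter_add_mem_add_mem_le {G : Type*} [Add G] [IsLeftCancelAdd G] [DecidableEq G]
    (A B C T : Finset G) :
    #((A ×ˢ B ×ˢ C).filter fun q => q.1 + q.2.1 ∈ T ∧ q.1 + q.2.2 ∈ T) ≤ #A * #T ^ 2 := by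
  rw [sq, ← card_product, ← card_product]
  refine card_le_card_of_injOn (fun q => (q.1, q.1 + q.2.1, q.1 + q.2.2)) ?_ ?_
  · intro q hq
    simp only [coe_filter, mem_product, Set.mem_ofPred_eq] at hq
    simp only [coe_product, Set.mem_prod, mem_coe]
    exact ⟨hq.1.1, hq.2⟩
  · rintro ⟨a, b, c⟩ - ⟨a', b', c'⟩ - h
    simp only [Prod.mk.injEq] at h
    obtain ⟨rfl, hb, hc⟩ := h
    rw [add_left_cancel hb, add_left_cancel hc]

theorem card_intRange {s : ℝ} (hs : 0 ≤ s) : (#(intRange s) : ℝ) = 2 * ⌊s / 2⌋ + 1 := by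
  have hfloor : (0 : ℤ) ≤ ⌊s / 2⌋ := Int.floor_nonneg.2 (by linarith)
  rw [intRange, Int.card_Icc, show ⌊s / 2⌋ + 1 - -⌊s / 2⌋ = 2 * ⌊s / 2⌋ + 1 by ring]
  rw [← Int.cast_natCast, Int.toNat_of_nonneg (by omega)]
  push_cast
  ring

theorem card_intRange_le {s : ℝ} (hs : 0 ≤ s) : (#(intRange s) : ℝ) ≤ s + 1 := by
  rw [card_intRange hs]
  linarith [Int.floor_le (s / 2)]

theorem sub_one_le_card_intRange {s : ℝ} (hs : 0 ≤ s) : s - 1 ≤ (#(intRange s) : ℝ) := by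
  rw [card_intRange hs]
  linarith [Int.sub_one_lt_floor (s / 2)]

theorem card_intRange_mul_le {s p : ℝ} (hs : 3 ≤ s) (hp0 : 0 < p) (hp1 : p ≤ 1) :
    (#(intRange (s * p)) : ℝ) ≤ (p + 3 / s) * #(intRange s) := by
  have hs0 : 0 < s := by linarith
  have h3s : 3 / s ≤ 1 := (div_le_one hs0).2 hs
  calc (#(intRange (s * p)) : ℝ) ≤ s * p + 1 := card_intRange_le (by positivity)
    _ ≤ (p + 3 / s) * (s - 1) := by
        have : (p + 3 / s) * (s - 1) = s * p + 1 + (2 - p - 3 / s) := by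
          field_simp
          ring
        linarith
    _ ≤ (p + 3 / s) * #(intRange s) := by
        gcongr
        exact sub_one_le_card_intRange hs0.le

theorem prob_two_correlated_sums_in_range (s : ℝ) (hs : 10 < s)
    (p : ℝ) (hp0 : 0 < p) (hp1 : p ≤ 1) :
    (((intRange s ×ˢ intRange s ×ˢ intRange s).filter fun q =>
          q.1 + q.2.1 ∈ intRange (s * p) ∧ q.1 + q.2.2 ∈ intRange (s * p)).card : ℝ) /
        ((intRange s).card : ℝ) ^ 3
      ≤ p ^ 2 * (1 + 3 / (s * p)) ^ 2 := by
  have hs0 : 0 < s := by linarith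
  have hA : (0 : ℝ) < #(intRange s) := by
    linarith [sub_one_le_card_intRange hs0.le]
  rw [div_le_iff₀ (by positivity)]
  calc _ ≤ (#(intRange s) * #(intRange (s * p)) ^ 2 : ℝ) := by
        exact_mod_cast card_filter_add_mem_add_mem_le _ _ _ _
    _ ≤ #(intRange s) * ((p + 3 / s) * #(intRange s)) ^ 2 := by
        gcongr
        exact card_intRange_mul_le (by linarith) hp0 hp1
    _ = p ^ 2 * (1 + 3 / (s * p)) ^ 2 * #(intRange s) ^ 3 := by
        field_simp
end
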